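/- arXiv:2507.00633 — 4 statements merged into one kernel-verified Lean document; each statement's English description precedes it below -/
import Mathlib

section
/- Let s, N, r_hat be natural numbers, let θ : Fin N → ℤ^s and d : Fin r_hat → ℤ^s, let J ⊆ Fin N be a subset and p : J → Fin r_hat an injective map such that d(p(i)) = θ(i) for every i ∈ J. Then there exist subsets 𝔥, 𝔴 ⊆ Fin r_hat with |𝔥| = |𝔴| − |J| such that, for every σ ∈ ℂ^s satisfying Γ(1 − 𝚒⟨d(α),σ⟩) ≠ 0 for all α ∈ Fin r_hat, one has ∏_{i ∈ Fin N} Γ(2𝚒⟨θ(i),σ⟩) · ∏_{α ∈ Fin r_hat} Γ(1 − 2𝚒⟨d(α),σ⟩)/Γ(1 − 𝚒⟨d(α),σ⟩) = ∏_{i ∈ J} π/sin(2π𝚒⟨θ(i),σ⟩) · ∏_{i ∈ Fin N, i ∉ J} Γ(2𝚒⟨θ(i),σ⟩) · ∏_{α ∈ 𝔴} Γ(1 − 𝚒⟨d(α),σ⟩)^{−1} · ∏_{α ∈ 𝔥} Γ(1 − 2𝚒⟨d(α),σ⟩). -/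
open Complex Finset

/-- The pairing `⟨v, σ⟩ = ∑ a, v a * σ a` between an integer weight vector and `σ ∈ ℂ^s`. -/
noncomputable def pairing {s : ℕ} (v : Fin s → ℤ) (σ : Fin s → ℂ) : ℂ :=
  ∑ a, (v a : ℂ) * σ a

theorem stmt0 (s N rhat : ℕ) (θ : Fin N → Fin s → ℤ) (d : Fin rhat → Fin s → ℤ)
    (J : Finset (Fin N)) (p : Fin N → Fin rhat)
    (hpinj : Set.InjOn p ↑J)
    (hpd : ∀ i ∈ J, d (p i) = θ i) :
    ∃ 𝔥 𝔴 : Finset (Fin rhat),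
      (𝔥.card : ℤ) = (𝔴.card : ℤ) - (J.card : ℤ) ∧
      ∀ σ : Fin s → ℂ,
        (∀ α : Fin rhat, Complex.Gamma (1 - Complex.I * pairing (d α) σ) ≠ 0) →
        (∏ i : Fin N, Complex.Gamma (2 * Complex.I * pairing (θ i) σ)) *
          (∏ α : Fin rhat,
            Complex.Gamma (1 - 2 * Complex.I * pairing (d α) σ) /
              Complex.Gamma (1 - Complex.I * pairing (d α) σ)) =
        (∏ i ∈ J,
            (Real.pi : ℂ) / Complex.sin (2 * (Real.pi : ℂ) * Complex.I * pairing (θ i) σ)) *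
          (∏ i ∈ Jᶜ, Complex.Gamma (2 * Complex.I * pairing (θ i) σ)) *
          (∏ α ∈ 𝔴, (Complex.Gamma (1 - Complex.I * pairing (d α) σ))⁻¹) *
          (∏ α ∈ 𝔥, Complex.Gamma (1 - 2 * Complex.I * pairing (d α) σ)) := by
  classical
  refine ⟨(J.image p)ᶜ, Finset.univ, ?_, ?_⟩
  · have h1 : (J.image p).card = J.card := Finset.card_image_of_injOn hpinj
    have h3 : (J.image p).card ≤ rhat := by
      simpa using Finset.card_le_univ (J.image p)
    have h2 : ((J.image p)ᶜ).card = rhat - (J.image p).card := by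
      simp [Finset.card_compl]
    simp only [Finset.card_univ, Fintype.card_fin]
    omega
  · intro σ _
    have key : ∀ i ∈ J,
        Complex.Gamma (2 * Complex.I * pairing (θ i) σ) *
          Complex.Gamma (1 - 2 * Complex.I * pairing (d (p i)) σ) =
        (Real.pi : ℂ) / Complex.sin (2 * (Real.pi : ℂ) * Complex.I * pairing (θ i) σ) := by
      intro i hi
      rw [hpd i hi, Complex.Gamma_mul_Gamma_one_sub]
      ring_nf
    calc (∏ i : Fin N, Complex.Gamma (2 * Complex.I * pairing (θ i) σ)) *
          (∏ α : Fin rhat,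
            Complex.Gamma (1 - 2 * Complex.I * pairing (d α) σ) /
              Complex.Gamma (1 - Complex.I * pairing (d α) σ))
        = ((∏ i ∈ J, Complex.Gamma (2 * Complex.I * pairing (θ i) σ)) *
            (∏ i ∈ Jᶜ, Complex.Gamma (2 * Complex.I * pairing (θ i) σ))) *
          (((∏ i ∈ J, Complex.Gamma (1 - 2 * Complex.I * pairing (d (p i)) σ)) *
            (∏ α ∈ (J.image p)ᶜ, Complex.Gamma (1 - 2 * Complex.I * pairing (d α) σ))) *
           (∏ α : Fin rhat, (Complex.Gamma (1 - Complex.I * pairing (d α) σ))⁻¹)) := by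
          rw [← Finset.prod_mul_prod_compl J
            (fun i => Complex.Gamma (2 * Complex.I * pairing (θ i) σ))]
          simp only [div_eq_mul_inv]
          rw [Finset.prod_mul_distrib,
            ← Finset.prod_mul_prod_compl (J.image p)
              (fun α => Complex.Gamma (1 - 2 * Complex.I * pairing (d α) σ)),
            Finset.prod_image (fun x hx y hy h => hpinj hx hy h)]
      _ = ((∏ i ∈ J, Complex.Gamma (2 * Complex.I * pairing (θ i) σ)) *
            (∏ i ∈ J, Complex.Gamma (1 - 2 * Complex.I * pairing (d (p i)) σ))) *
          (∏ i ∈ Jᶜ, Complex.Gamma (2 * Complex.I * pairing (θ i) σ)) *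
          (∏ α : Fin rhat, (Complex.Gamma (1 - Complex.I * pairing (d α) σ))⁻¹) *
          (∏ α ∈ (J.image p)ᶜ, Complex.Gamma (1 - 2 * Complex.I * pairing (d α) σ)) := by
          ring
      _ = _ := by
          rw [← Finset.prod_mul_distrib, Finset.prod_congr rfl key]
end

section
/- Let w be a complex number with cos(π𝚒w) ≠ 0. Then Γ(2𝚒w) · Γ(1/2 − 𝚒w) = (√π/2) · exp(2𝚒w·log 2) · Γ(𝚒w) / cos(π𝚒w). -/
theorem stmt4 (w : ℂ) (hw : Complex.cos ((Real.pi : ℂ) * Complex.I * w) ≠ 0) :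
    Complex.Gamma (2 * Complex.I * w) * Complex.Gamma (1 / 2 - Complex.I * w) =
      ((Real.sqrt Real.pi : ℂ) / 2) * Complex.exp (2 * Complex.I * w * (Real.log 2 : ℂ)) *
        Complex.Gamma (Complex.I * w) / Complex.cos ((Real.pi : ℂ) * Complex.I * w) := by
  set z := Complex.I * w with hz
  have h2z : (2 : ℂ) * Complex.I * w = 2 * z := by rw [hz]; ring
  rw [h2z]
  set E := Complex.exp (2 * z * (Real.log 2 : ℂ)) with hE
  set S := (Real.sqrt Real.pi : ℂ) with hS
  set A := (2 : ℂ) ^ ((1 : ℂ) - 2 * z) with hAdef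
  have hdup := Complex.Gamma_mul_Gamma_add_half z
  have hrefl := Complex.Gamma_mul_Gamma_one_sub (1/2 + z)
  have hsin : Complex.sin ((Real.pi : ℂ) * (1/2 + z)) =
      Complex.cos ((Real.pi : ℂ) * Complex.I * w) := by
    have h : (Real.pi : ℂ) * (1/2 + z) = (Real.pi : ℂ) * z + (Real.pi : ℂ) / 2 := by ring
    rw [h, Complex.sin_add_pi_div_two, hz, mul_assoc]
  have h1sub : (1 : ℂ) - (1/2 + z) = 1/2 - z := by ring
  rw [hsin, h1sub] at hrefl
  have hlog : Complex.log 2 = (Real.log 2 : ℂ) := by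
    rw [show (2:ℂ) = ((2:ℝ):ℂ) by norm_num, ← Complex.ofReal_log (by norm_num : (0:ℝ) ≤ 2)]
  have hA : A * E = 2 := by
    rw [hAdef, hE, Complex.cpow_def_of_ne_zero two_ne_zero, ← Complex.exp_add, hlog]
    have h : (Real.log 2 : ℂ) * (1 - 2 * z) + 2 * z * (Real.log 2 : ℂ) =
        (Real.log 2 : ℂ) := by ring
    rw [h, ← hlog, Complex.exp_log two_ne_zero]
  have hAne : A ≠ 0 := left_ne_zero_of_mul (hA ▸ two_ne_zero)
  have hSne : S ≠ 0 := by
    rw [hS]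
    exact_mod_cast Complex.ofReal_ne_zero.mpr (ne_of_gt (Real.sqrt_pos.mpr Real.pi_pos))
  have hsq : S * S = (Real.pi : ℂ) := by
    rw [hS, ← Complex.ofReal_mul, Real.mul_self_sqrt Real.pi_nonneg]
  have hrefl2 : Complex.Gamma (1/2 + z) * Complex.Gamma (1/2 - z) *
      Complex.cos ((Real.pi : ℂ) * Complex.I * w) = (Real.pi : ℂ) := by
    rw [hrefl]; field_simp
  have hcomm : Complex.Gamma (z + 1/2) = Complex.Gamma (1/2 + z) := by rw [add_comm]
  rw [hcomm] at hdup
  have hG2 : Complex.Gamma (2 * z) =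
      Complex.Gamma z * Complex.Gamma (1/2 + z) / (A * S) := by
    rw [eq_div_iff (mul_ne_zero hAne hSne)]
    linear_combination -hdup
  rw [eq_div_iff hw, hG2, div_mul_eq_mul_div, div_mul_eq_mul_div,
    div_eq_iff (mul_ne_zero hAne hSne)]
  linear_combination Complex.Gamma z * hrefl2 +
    (-(E * A * Complex.Gamma z) / 2) * hsq + (-(Real.pi : ℂ) * Complex.Gamma z / 2) * hA
end

section
/- Let s ≥ 2 and r be natural numbers with 2r > s, let κ : Fin (s−1) → ℕ, set m_a = κ_a·r + 1 for a = 1,…,s−1, m_s = 2r − s, n = Σ_{a=1}^{s} m_a, and define ν_1,…,ν_{n+s} ∈ ℤ^n as follows: ν_i = e_i for 1 ≤ i ≤ n, ν_{n+1} = (−1,…,−1), and ν_{n+1+a} = Σ_{i ∈ 𝔐_a} e_i for a = 1,…,s−1, where 𝔐_1,…,𝔐_s are the consecutive blocks of {1,…,n} of sizes m_1,…,m_s. Let φ : {1,…,n+s} → Fin r be any function whose restriction to the last 2r indices {n+s+1−2r,…,n+s} has every fiber of cardinality exactly 2. Define lifted vectors in ℤ^r ⊕ ℤ^n by ν̃_α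 = (e_α, 0) for α ∈ Fin r and ν̃_{r+i} = (e_{φ(i)}, ν_i) for i = 1,…,n+s. Then 2·Σ_{α ∈ Fin r} ν̃_α = Σ_{i=n+s+1−2r}^{n+s} ν̃_{r+i}. -/
open Finset

/-- The starting position (0-based) of the `a`-th consecutive block of sizes `m`. -/
def blockOffset {s : ℕ} (m : Fin s → ℕ) (a : Fin s) : ℕ :=
  ∑ b ∈ Finset.Iio a, m b

/-- The `a`-th consecutive block `𝔐_a` of `{0, …, n-1}`, of size `m a`
(provided `n = ∑ a, m a`). -/
def block {s : ℕ} (n : ℕ) (m : Fin s → ℕ) (a : Fin s) : Finset (Fin n) :=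
  Finset.univ.filter fun i => blockOffset m a ≤ i.val ∧ i.val < blockOffset m a + m a

/-! The first components agree because every fibre of `φ` on the last `2r` indices has exactly two
elements. For the second, `m_s = 2r - s` makes the last `2r` indices exactly the block `𝔐_s`
followed by `n+1, …, n+s`, so the `ν`'s there sum to
`∑_{i ∈ 𝔐_s} e_i - (1, …, 1) + ∑_{a < s} ∑_{i ∈ 𝔐_a} e_i`, which vanishes because the blocks
partition `{1, …, n}`. -/

theorem Finset.sum_pi_single_one_eq_card_filter {ι κ R : Type*} [DecidableEq κ]
    [AddCommMonoidWithOne R] (S : Finset ι) (f : ι → κ) :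
    ∑ i ∈ S, Pi.single (f i) (1 : R) = fun β => (#{i ∈ S | f i = β} : R) := by
  funext β
  simp [Finset.sum_apply, Pi.single_apply, eq_comm]

theorem Fin.sum_filter_le_val_add {M : Type*} [AddCommMonoid M] {n s t : ℕ} (ht : t ≤ n)
    (f : Fin (n + s) → M) :
    ∑ i ∈ univ.filter (fun i : Fin (n + s) => t ≤ i.val), f i =
      ∑ i ∈ univ.filter (fun i : Fin n => t ≤ i.val), f (Fin.castAdd s i) +
        ∑ c, f (Fin.natAdd n c) := by
  rw [sum_filter, Fin.sum_univ_add, sum_filter]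
  congr 1
  refine sum_congr rfl fun c _ => if_pos ?_
  simp only [Fin.val_natAdd]
  omega

section Blocks

variable {s n : ℕ} (m : Fin s → ℕ)

theorem blockOffset_eq_sum_fin (a : Fin s) :
    blockOffset m a = ∑ i : Fin a, m (Fin.castLE a.2.le i) := by
  have hIio : (univ : Finset (Fin a)).map (Fin.castLEEmb a.2.le) = Iio a := by
    ext b
    simp only [mem_map, mem_univ, true_and, mem_Iio, Fin.castLEEmb_apply]
    exact ⟨by rintro ⟨i, rfl⟩; exact i.2, fun h => ⟨⟨b, h⟩, rfl⟩⟩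
  rw [blockOffset, ← hIio, sum_map]
  rfl

theorem blockOffset_add_self (a : Fin s) : blockOffset m a + m a = ∑ c ∈ Iic a, m c := by
  rw [← Iio_insert, sum_insert (by simp), blockOffset, add_comm]

theorem blockOffset_add_le {a b : Fin s} (hab : a < b) :
    blockOffset m a + m a ≤ blockOffset m b := by
  rw [blockOffset_add_self]
  exact sum_le_sum_of_subset fun c hc => mem_Iio.mpr ((mem_Iic.mp hc).trans_lt hab)

theorem pairwiseDisjoint_block : (Set.univ : Set (Fin s)).PairwiseDisjoint (block n m) := by
  intro a _ b _ hab
  refine disjoint_left.mpr fun j hja hjb => ?_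
  simp only [block, mem_filter, mem_univ, true_and] at hja hjb
  rcases hab.lt_or_gt with h | h <;> have := blockOffset_add_le m h <;> omega

theorem univ_biUnion_block (hn : n = ∑ a, m a) : univ.biUnion (block n m) = univ := by
  subst hn
  refine eq_univ_of_forall fun j => ?_
  obtain ⟨⟨a, k⟩, rfl⟩ := finSigmaFinEquiv.surjective j
  have hj := finSigmaFinEquiv_apply (n := m) ⟨a, k⟩
  simp only [mem_biUnion, mem_univ, true_and, block, mem_filter, hj, ← blockOffset_eq_sum_fin]
  exact ⟨a, by omega⟩

theorem sum_sum_block_single {R : Type*} [AddCommMonoidWithOne R] (hn : n = ∑ a, m a) :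
    ∑ a, ∑ i ∈ block n m a, Pi.single i (1 : R) = 1 := by
  rw [← sum_biUnion (by simpa using pairwiseDisjoint_block m), univ_biUnion_block m hn]
  exact univ_sum_single 1

end Blocks

theorem blockOffset_last_add {k n : ℕ} (m : Fin (k + 1) → ℕ) (hn : n = ∑ a, m a) :
    blockOffset m (Fin.last k) + m (Fin.last k) = n := by
  rw [blockOffset_add_self, hn]
  exact congrArg (∑ c ∈ ·, m c) (eq_univ_of_forall fun c => mem_Iic.mpr (Fin.le_last c))

theorem block_last_eq_filter {k n : ℕ} (m : Fin (k + 1) → ℕ) (hn : n = ∑ a, m a) :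
    block n m (Fin.last k) = univ.filter fun i : Fin n => blockOffset m (Fin.last k) ≤ i.val := by
  have := blockOffset_last_add m hn
  ext i
  simp only [block, mem_filter, mem_univ, true_and, and_iff_left_iff_imp]
  omega

theorem stmt6 (s r n : ℕ) (hs : 2 ≤ s) (hr : s < 2 * r)
    (m : Fin s → ℕ)
    (hm2 : m ⟨s - 1, by omega⟩ = 2 * r - s)
    (hn : n = ∑ a, m a)
    -- the vectors ν_1, …, ν_{n+s} ∈ ℤ^n (0-based: ν 0, …, ν (n+s-1))
    (ν : Fin (n + s) → Fin n → ℤ)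
    (hν1 : ∀ i : Fin (n + s), ∀ h : i.val < n, ν i = Pi.single ⟨i.val, h⟩ 1)
    (hν2 : ν ⟨n, by omega⟩ = fun _ => -1)
    (hν3 : ∀ a : Fin (s - 1),
      ν ⟨n + 1 + a.val, by have := a.isLt; omega⟩ =
        ∑ i ∈ block n m (Fin.castLE (Nat.sub_le s 1) a), Pi.single i 1)
    -- the nef-partition assignment φ, pairwise on the last 2r indices
    (φ : Fin (n + s) → Fin r)
    (hφ : ∀ β : Fin r,
      (Finset.univ.filter fun i : Fin (n + s) => n + s - 2 * r ≤ i.val ∧ φ i = β).card = 2) :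
    -- `2 · Σ_{α} ν̃_α = Σ_{i = n+s+1-2r}^{n+s} ν̃_{r+i}` in `ℤ^r ⊕ ℤ^n`
    (2 : ℤ) • (∑ α : Fin r, ((Pi.single α 1 : Fin r → ℤ), (0 : Fin n → ℤ))) =
      ∑ i ∈ Finset.univ.filter (fun i : Fin (n + s) => n + s - 2 * r ≤ i.val),
        ((Pi.single (φ i) 1 : Fin r → ℤ), ν i) := by
  obtain ⟨k, rfl⟩ : ∃ k, s = k + 1 := ⟨s - 1, by omega⟩
  refine Prod.ext ?_ ?_
  · simp only [Prod.smul_fst, Prod.fst_sum, sum_pi_single_one_eq_card_filter, filter_filter, hφ]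
    funext β
    simp [filter_eq']
  · have htail : blockOffset m (Fin.last k) = n + (k + 1) - 2 * r := by
      have := blockOffset_last_add m hn
      change m (Fin.last k) = _ at hm2
      omega
    simp only [Prod.smul_snd, Prod.snd_sum, sum_const_zero, smul_zero]
    symm
    calc ∑ i ∈ univ.filter (fun i : Fin (n + (k + 1)) => n + (k + 1) - 2 * r ≤ i.val), ν i
        = ∑ i ∈ block n m (Fin.last k), ν (Fin.castAdd (k + 1) i) +
            (ν (Fin.natAdd n 0) + ∑ a : Fin k, ν (Fin.natAdd n a.succ)) := by
          rw [Fin.sum_filter_le_val_add (by omega), block_last_eq_filter m hn, htail,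
            Fin.sum_univ_succ]
      _ = ∑ i ∈ block n m (Fin.last k), Pi.single i 1 +
            (-1 + ∑ a : Fin k, ∑ i ∈ block n m a.castSucc, Pi.single i 1) := by
          congr 1
          · exact sum_congr rfl fun i _ => hν1 _ i.isLt
          · refine congrArg₂ (· + ·) hν2 (sum_congr rfl fun a _ => ?_)
            refine (congrArg ν (Fin.ext ?_)).trans (hν3 a)
            simp only [Fin.val_natAdd, Fin.val_succ]
            omega
      _ = 0 := by
          rw [← sub_eq_zero_of_eq (sum_sum_block_single m hn), Fin.sum_univ_castSucc]
          abel
end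

section
/- Let m, p be natural numbers, r ≤ m, A : Fin m → Fin p → ℂ, and v ∈ ℂ. Let c ∈ ℂ^m be a point whose first r coordinates c_α (α < r) lie in the slit plane ℂ ∖ (−∞, 0], and let f : ℂ^m → ℂ be differentiable at c in each coordinate with Σ_{J ∈ Fin m} (A J j)·c_J·(∂f/∂c_J)(c) = 0 for every j ∈ Fin p. Define g(x) = (∏_{α < r} x_α^{−v})·f(x) (principal-branch complex powers). Then for every j ∈ Fin p, Σ_{J ∈ Fin m} (A J j)·c_J·(∂g/∂c_J)(c) = −v·(Σ_{α < r} A α j)·g(c). -/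
/-!
The Euler operator `∑ J, a J * x J * ∂_J` obeys the Leibniz rule for functions differentiable
along the coordinate axes. It kills `f` by hypothesis, and since `x ∂_x (x ^ s) = s * x ^ s` on
the slit plane, it multiplies the monomial `∏_{α < r} x_α ^ (-v)` by `-v * ∑_{α < r} a α`.
-/

open Finset

section LineDeriv

variable {𝕜 : Type*} [NontriviallyNormedField 𝕜]

theorem HasLineDerivAt.mul {E : Type*} [AddCommGroup E] [Module 𝕜 E] {f g : E → 𝕜}
    {f' g' : 𝕜} {x v : E} (hf : HasLineDerivAt 𝕜 f f' x v) (hg : HasLineDerivAt 𝕜 g g' x v) :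
    HasLineDerivAt 𝕜 (fun y => f y * g y) (f' * g x + f x * g') x v := by
  simpa [HasLineDerivAt] using HasDerivAt.fun_mul hf hg

variable {ι : Type*} [DecidableEq ι]

theorem HasDerivAt.hasLineDerivAt_single {F : Type*} [NormedAddCommGroup F] [NormedSpace 𝕜 F]
    {f : (ι → 𝕜) → F} {f' : F} {x : ι → 𝕜} {i : ι}
    (hf : HasDerivAt (fun y => f (Function.update x i y)) f' (x i)) :
    HasLineDerivAt 𝕜 f f' x (Pi.single i 1) := by
  have hline : ∀ t : 𝕜, x + t • Pi.single i 1 = Function.update x i (x i + t) := by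
    intro t
    ext k
    rcases eq_or_ne k i with rfl | hk <;> simp [*]
  simpa [HasLineDerivAt, hline] using HasDerivAt.comp_const_add (x i) 0 (by rwa [add_zero])

theorem hasLineDerivAt_prod_single_of_mem {S : Finset ι} {g : ι → 𝕜 → 𝕜} {d : 𝕜}
    {x : ι → 𝕜} {i : ι} (hi : i ∈ S) (hg : HasDerivAt (g i) d (x i)) :
    HasLineDerivAt 𝕜 (fun y => ∏ α ∈ S, g α (y α)) (d * ∏ α ∈ S \ {i}, g α (x α))
      x (Pi.single i 1) := by
  refine HasDerivAt.hasLineDerivAt_single ?_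
  have hupdate : ∀ y, ∏ α ∈ S, g α (Function.update x i y α)
      = g i y * ∏ α ∈ S \ {i}, g α (x α) := by
    intro y
    rw [← prod_sdiff (singleton_subset_iff.mpr hi), prod_singleton, mul_comm]
    congr 1
    · simp
    · exact prod_congr rfl fun α hα => by
        rw [Function.update_of_ne (by simpa using (mem_sdiff.mp hα).2)]
  simpa only [hupdate] using hg.mul_const _

theorem hasLineDerivAt_prod_single_of_notMem {S : Finset ι} (g : ι → 𝕜 → 𝕜) (x : ι → 𝕜)
    {i : ι} (hi : i ∉ S) :
    HasLineDerivAt 𝕜 (fun y => ∏ α ∈ S, g α (y α)) 0 x (Pi.single i 1) := by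
  refine HasDerivAt.hasLineDerivAt_single ?_
  have hupdate : ∀ y, ∏ α ∈ S, g α (Function.update x i y α) = ∏ α ∈ S, g α (x α) :=
    fun y => prod_congr rfl fun α hα => by rw [Function.update_of_ne (ne_of_mem_of_not_mem hα hi)]
  simpa only [hupdate] using hasDerivAt_const (x i) (∏ α ∈ S, g α (x α))

end LineDeriv

section Euler

variable {𝕜 ι : Type*} [NontriviallyNormedField 𝕜] [Fintype ι] [DecidableEq ι]

noncomputable def eulerOperator (a : ι → 𝕜) (f : (ι → 𝕜) → 𝕜) (x : ι → 𝕜) : 𝕜 :=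
  ∑ J, a J * x J * lineDeriv 𝕜 f x (Pi.single J 1)

theorem eulerOperator_mul (a : ι → 𝕜) {f g : (ι → 𝕜) → 𝕜} {x : ι → 𝕜}
    (hf : ∀ J, LineDifferentiableAt 𝕜 f x (Pi.single J 1))
    (hg : ∀ J, LineDifferentiableAt 𝕜 g x (Pi.single J 1)) :
    eulerOperator a (fun y => f y * g y) x
      = eulerOperator a f x * g x + f x * eulerOperator a g x := by
  simp only [eulerOperator, ((hf _).hasLineDerivAt.mul (hg _).hasLineDerivAt).lineDeriv,
    sum_mul, mul_sum, ← sum_add_distrib]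
  exact sum_congr rfl fun J _ => by ring

end Euler

section Monomial

variable {ι : Type*} [DecidableEq ι] {S : Finset ι} {s : ℂ} {c : ι → ℂ}

theorem hasLineDerivAt_prod_cpow_single (hc : ∀ α ∈ S, c α ∈ Complex.slitPlane) (i : ι) :
    HasLineDerivAt ℂ (fun x => ∏ α ∈ S, x α ^ s)
      (if i ∈ S then s * c i ^ (s - 1) * ∏ α ∈ S \ {i}, c α ^ s else 0) c (Pi.single i 1) := by
  split_ifs with hi
  · exact hasLineDerivAt_prod_single_of_mem (g := fun _ z => z ^ s) hi
      ((hasDerivAt_id (c i)).cpow_const (hc i hi) |>.congr_deriv (mul_one _))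
  · exact hasLineDerivAt_prod_single_of_notMem (fun _ z => z ^ s) c hi

theorem mul_lineDeriv_prod_cpow_single (hc : ∀ α ∈ S, c α ∈ Complex.slitPlane) (i : ι) :
    c i * lineDeriv ℂ (fun x => ∏ α ∈ S, x α ^ s) c (Pi.single i 1)
      = if i ∈ S then s * ∏ α ∈ S, c α ^ s else 0 := by
  rw [(hasLineDerivAt_prod_cpow_single hc i).lineDeriv]
  split_ifs with hi
  · have hci : c i ≠ 0 := Complex.slitPlane_ne_zero (hc i hi)
    rw [← prod_sdiff (singleton_subset_iff.mpr hi), prod_singleton,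
      Complex.cpow_sub _ _ hci, Complex.cpow_one]
    field_simp
  · exact mul_zero _

theorem eulerOperator_prod_cpow [Fintype ι] (a : ι → ℂ)
    (hc : ∀ α ∈ S, c α ∈ Complex.slitPlane) :
    eulerOperator a (fun x => ∏ α ∈ S, x α ^ s) c = s * (∑ α ∈ S, a α) * ∏ α ∈ S, c α ^ s := by
  simp only [eulerOperator, mul_assoc, mul_lineDeriv_prod_cpow_single hc, mul_ite, mul_zero,
    ← sum_filter, filter_mem_eq_inter, univ_inter, sum_mul, mul_sum]
  exact sum_congr rfl fun α _ => by ring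

end Monomial

theorem stmt9_general (m p r : ℕ) (A : Fin m → Fin p → ℂ) (v : ℂ)
    (c : Fin m → ℂ) (hc : ∀ α : Fin m, α.val < r → c α ∈ Complex.slitPlane)
    (f : (Fin m → ℂ) → ℂ)
    (hdiff : ∀ J : Fin m, LineDifferentiableAt ℂ f c (Pi.single J 1))
    (hEuler : ∀ j : Fin p,
      ∑ J : Fin m, A J j * c J * lineDeriv ℂ f c (Pi.single J 1) = 0) :
    ∀ j : Fin p,
      ∑ J : Fin m, A J j * c J *
          lineDeriv ℂ
            (fun x => (∏ α ∈ Finset.univ.filter (fun α : Fin m => α.val < r), x α ^ (-v)) * f x)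
            c (Pi.single J 1) =
        -v * (∑ α ∈ Finset.univ.filter (fun α : Fin m => α.val < r), A α j) *
          ((∏ α ∈ Finset.univ.filter (fun α : Fin m => α.val < r), c α ^ (-v)) * f c) := by
  intro j
  set S := univ.filter fun α : Fin m => α.val < r
  have hcS : ∀ α ∈ S, c α ∈ Complex.slitPlane := fun α hα => hc α (mem_filter.mp hα).2
  have hf : eulerOperator (A · j) f c = 0 := hEuler j
  have hmonomial J : LineDifferentiableAt ℂ (fun x => ∏ α ∈ S, x α ^ (-v)) c (Pi.single J 1) :=
    (hasLineDerivAt_prod_cpow_single hcS J).lineDifferentiableAt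
  change eulerOperator (A · j) (fun x => (∏ α ∈ S, x α ^ (-v)) * f x) c = _
  rw [eulerOperator_mul _ hmonomial hdiff, eulerOperator_prod_cpow _ hcS, hf, mul_zero,
    add_zero, mul_assoc]

theorem stmt9 (m p r : ℕ) (hr : r ≤ m) (A : Fin m → Fin p → ℂ) (v : ℂ)
    (c : Fin m → ℂ) (hc : ∀ α : Fin m, α.val < r → c α ∈ Complex.slitPlane)
    (f : (Fin m → ℂ) → ℂ)
    (hdiff : ∀ J : Fin m, LineDifferentiableAt ℂ f c (Pi.single J 1))
    (hEuler : ∀ j : Fin p,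
      ∑ J : Fin m, A J j * c J * lineDeriv ℂ f c (Pi.single J 1) = 0) :
    ∀ j : Fin p,
      ∑ J : Fin m, A J j * c J *
          lineDeriv ℂ
            (fun x => (∏ α ∈ Finset.univ.filter (fun α : Fin m => α.val < r), x α ^ (-v)) * f x)
            c (Pi.single J 1) =
        -v * (∑ α ∈ Finset.univ.filter (fun α : Fin m => α.val < r), A α j) *
          ((∏ α ∈ Finset.univ.filter (fun α : Fin m => α.val < r), c α ^ (-v)) * f c) :=
  stmt9_general m p r A v c hc f hdiff hEuler
end
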